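/- Let R be an irreducible crystallographic root system spanning a finite-dimensional real vector space V, with fixed base of simple roots {α_i}, fundamental Weyl chamber C_f and positive cone C⁺. Then the fundamental Weyl chamber is contained in the positive cone: every v ∈ V with ⟨α_i^∨, v⟩ ≥ 0 for all i is a nonnegative real linear combination of the simple roots, i.e. C_f ⊆ C⁺. -/

import Mathlib

/-- A finite crystallographic root system in a real vector space `V`, together with a fixed
base of simple roots indexed by `ι` (which form a basis of `V`). For each root `α`, the
coroot `α^∨` is recorded as a linear functional on `V` with `⟨α^∨, α⟩ = 2`, such that
the reflection `v ↦ v - ⟨α^∨, v⟩ • α` preserves the root set, and all Cartan pairings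
`⟨α^∨, β⟩` are integers. Every root is a nonnegative or nonpositive combination of the
simple roots. -/
structure RootSystemWithBase (ι V : Type*) [Fintype ι] [AddCommGroup V] [Module ℝ V] where
  /-- the set of roots -/
  R : Set V
  finR : R.Finite
  /-- the coroot `α^∨ ∈ V*` of a root `α` (junk value off `R`) -/
  coroot : V → V →ₗ[ℝ] ℝ
  coroot_self : ∀ α ∈ R, coroot α α = 2
  reflect_mem : ∀ α ∈ R, ∀ β ∈ R, β - coroot α β • α ∈ R
  crystallographic : ∀ α ∈ R, ∀ β ∈ R, ∃ n : ℤ, coroot α β = (n : ℝ)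
  /-- the simple roots, forming a basis of `V` -/
  simple : Module.Basis ι ℝ V
  simple_mem : ∀ i, simple i ∈ R
  base_prop : ∀ α ∈ R, (∀ i, 0 ≤ simple.repr α i) ∨ (∀ i, simple.repr α i ≤ 0)

namespace RootSystemWithBase

variable {ι V : Type*} [Fintype ι] [AddCommGroup V] [Module ℝ V]
  (P : RootSystemWithBase ι V)

/-- The Weyl group: the subgroup of linear automorphisms of `V` generated by the
reflections `v ↦ v - ⟨α^∨, v⟩ • α` for roots `α`. -/
def weylGroup : Subgroup (V ≃ₗ[ℝ] V) :=
  Subgroup.closure {w | ∃ α ∈ P.R, ∀ v, w v = v - P.coroot α v • α}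

/-- The orbit `W.x` of a point `x` under the Weyl group. -/
def orbit (x : V) : Set V := {y | ∃ w ∈ P.weylGroup, w x = y}

/-- A dual half-apartment: `{v | f_i(v) ≤ k}` or `{v | f_i(v) ≥ k}` for a fundamental
coweight functional `f_i` (dual basis to the simple roots) and `k ∈ ℝ`. -/
def IsDualHalfApartment (H : Set V) : Prop :=
  ∃ (i : ι) (k : ℝ),
    H = {v | P.simple.coord i v ≤ k} ∨ H = {v | k ≤ P.simple.coord i v}

/-- The dual convex hull of `Y`: the intersection of all dual half-apartments
containing `Y` (the empty intersection being all of `V`). -/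
def dconv (Y : Set V) : Set V :=
  ⋂₀ {H | P.IsDualHalfApartment H ∧ Y ⊆ H}

/-- The fundamental Weyl chamber `C_f = {v | ⟨α_i^∨, v⟩ ≥ 0 for all i}`. -/
def fundChamber : Set V := {v | ∀ i, 0 ≤ P.coroot (P.simple i) v}

/-- The positive cone `C⁺`, the set of nonnegative linear combinations of simple roots. -/
def posCone : Set V :=
  {v | ∃ t : ι → ℝ, (∀ i, 0 ≤ t i) ∧ v = ∑ i, t i • P.simple i}

/-- Irreducibility: the base admits no partition into two nonempty mutually
orthogonal subsets. -/
def IsIrreducible : Prop :=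
  ∀ s : Set ι,
    (∀ i ∈ s, ∀ j ∉ s, P.coroot (P.simple i) (P.simple j) = 0 ∧
        P.coroot (P.simple j) (P.simple i) = 0) →
    s = ∅ ∨ s = Set.univ

end RootSystemWithBase

/-!
Averaging over the (finite) Weyl group gives a positive definite form `B` for which the
reflections are orthogonal, so `2 B(x, α) = ⟨α^∨, x⟩ B(α, α)`. Hence the simple roots form an
obtuse basis (`B(α_i, α_j) ≤ 0` for `i ≠ j`, as Cartan entries off the diagonal are `≤ 0`), and a
dominant `v` satisfies `B(v, α_j) ≥ 0`. If `v = p - n` with `p, n` the positive and negative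
parts of its coordinate vector, then `B(n, n) = B(p, n) - B(v, n) ≤ 0`, so `n = 0`.
-/

open LinearMap (BilinForm)

section

variable {𝕜 V ι : Type*} [CommRing 𝕜] [LinearOrder 𝕜] [IsStrictOrderedRing 𝕜]
  [AddCommGroup V] [Module 𝕜 V] [Fintype ι]

lemma Module.Basis.exists_bilinForm_pos (b : Module.Basis ι 𝕜 V) :
    ∃ B : BilinForm 𝕜 V, ∀ x ≠ 0, 0 < B x x := by
  refine ⟨(dotProductBilin 𝕜 𝕜).compl₁₂ b.equivFun.toLinearMap b.equivFun.toLinearMap,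
    fun x hx => ?_⟩
  have hne : b.equivFun x ≠ 0 := by simpa using hx
  simp only [LinearMap.compl₁₂_apply, dotProductBilin_apply_apply]
  exact lt_of_le_of_ne (Finset.sum_nonneg fun i _ => mul_self_nonneg _)
    (Ne.symm (dotProduct_self_eq_zero.not.mpr hne))

lemma posPart_mul_negPart_eq_zero (a : 𝕜) : a⁺ * a⁻ = 0 := by
  rcases le_total a 0 with ha | ha
  · rw [posPart_eq_zero.mpr ha, zero_mul]
  · rw [negPart_eq_zero.mpr ha, mul_zero]

lemma Module.Basis.repr_nonneg_of_obtuse (b : Module.Basis ι 𝕜 V) {B : BilinForm 𝕜 V}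
    (hB : ∀ x ≠ 0, 0 < B x x) (hobtuse : ∀ i j, i ≠ j → B (b i) (b j) ≤ 0) {v : V}
    (hv : ∀ j, 0 ≤ B v (b j)) (i : ι) : 0 ≤ b.repr v i := by
  set c : ι → 𝕜 := b.equivFun v
  set p := b.equivFun.symm c⁺
  set n := b.equivFun.symm c⁻
  have hv_eq : v = p - n := by
    rw [← map_sub, posPart_sub_negPart, LinearEquiv.symm_apply_apply]
  have hpn : B p n ≤ 0 := by
    simp only [p, n, Module.Basis.equivFun_symm_apply, map_sum, map_smul,
      LinearMap.sum_apply, LinearMap.smul_apply, smul_eq_mul, Finset.mul_sum]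
    rw [Finset.sum_comm]
    refine Finset.sum_nonpos fun k _ => Finset.sum_nonpos fun l _ => ?_
    rcases eq_or_ne k l with rfl | hkl
    · change (c k)⁻ * ((c k)⁺ * _) ≤ 0
      rw [mul_left_comm, ← mul_assoc, posPart_mul_negPart_eq_zero, zero_mul]
    · exact mul_nonpos_of_nonneg_of_nonpos (negPart_nonneg _)
        (mul_nonpos_of_nonneg_of_nonpos (posPart_nonneg _) (hobtuse k l hkl))
  have hvn : 0 ≤ B v n := by
    simp only [n, Module.Basis.equivFun_symm_apply, map_sum, map_smul, smul_eq_mul]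
    exact Finset.sum_nonneg fun j _ => mul_nonneg (negPart_nonneg _) (hv j)
  have hn : n = 0 := by
    by_contra hn
    have : B n n = B p n - B v n := by rw [hv_eq]; simp
    linarith [hB n hn]
  have hc : c⁻ = 0 := b.equivFun.symm.map_eq_zero_iff.mp hn
  simpa [c] using congrFun hc i

variable (G : Subgroup (V ≃ₗ[𝕜] V)) [Finite G]

lemma Subgroup.exists_bilinForm_pos_invariant {B₀ : BilinForm 𝕜 V} (hB₀ : ∀ x ≠ 0, 0 < B₀ x x) :
    ∃ B : BilinForm 𝕜 V, (∀ x ≠ 0, 0 < B x x) ∧ ∀ g ∈ G, ∀ x y, B (g x) (g y) = B x y := by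
  have := Fintype.ofFinite G
  refine ⟨∑ g : G, B₀.compl₁₂ (g : V ≃ₗ[𝕜] V).toLinearMap (g : V ≃ₗ[𝕜] V).toLinearMap,
    fun x hx => ?_, fun h hh x y => ?_⟩
  · simp only [LinearMap.sum_apply, LinearMap.compl₁₂_apply]
    refine Finset.sum_pos' (fun g _ => ?_) ⟨1, Finset.mem_univ _, hB₀ x hx⟩
    rcases eq_or_ne ((g : V ≃ₗ[𝕜] V) x) 0 with h | h
    · simp [h]
    · exact (hB₀ _ h).le
  · simp only [LinearMap.sum_apply, LinearMap.compl₁₂_apply]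
    exact Fintype.sum_equiv (Equiv.mulRight ⟨h, hh⟩) _ _ fun g => rfl

end

namespace RootSystemWithBase

open scoped Pointwise

variable {ι V : Type*} [Fintype ι] [AddCommGroup V] [Module ℝ V] (P : RootSystemWithBase ι V)

lemma ne_zero_of_mem {α : V} (hα : α ∈ P.R) : α ≠ 0 := by
  rintro rfl
  simpa using P.coroot_self 0 hα

/-- The root `α_j - ⟨α_i^∨, α_j⟩ α_i` has `α_j`-coordinate `1`, so it is positive and its
`α_i`-coordinate `-⟨α_i^∨, α_j⟩` is nonnegative. -/
lemma coroot_simple_apply_simple_nonpos {i j : ι} (hij : i ≠ j) :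
    P.coroot (P.simple i) (P.simple j) ≤ 0 := by
  have hroot := P.reflect_mem _ (P.simple_mem i) _ (P.simple_mem j)
  rcases P.base_prop _ hroot with hpos | hneg
  · simpa [Finsupp.single_apply, hij, hij.symm] using hpos i
  · exact absurd (hneg j) (by simp [hij])

lemma reflection_mem_weylGroup {α : V} (hα : α ∈ P.R) :
    Module.reflection (P.coroot_self α hα) ∈ P.weylGroup :=
  Subgroup.subset_closure ⟨α, hα, fun _ => Module.reflection_apply _ _⟩

lemma weylGroup_le_stabilizer : P.weylGroup ≤ MulAction.stabilizer (V ≃ₗ[ℝ] V) P.R := by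
  refine (Subgroup.closure_le _).mpr ?_
  rintro u ⟨α, hα, hu⟩
  obtain rfl : u = Module.reflection (P.coroot_self α hα) :=
    LinearEquiv.ext fun v => (hu v).trans (Module.reflection_apply _ _).symm
  have hmaps : Set.MapsTo (Module.reflection (P.coroot_self α hα)) P.R P.R := fun β hβ => by
    simpa [Module.reflection_apply] using P.reflect_mem α hα β hβ
  refine MulAction.mem_stabilizer_iff.mpr (hmaps.image_subset.antisymm fun β hβ => ?_)
  exact ⟨_, hmaps hβ, Module.involutive_reflection _ β⟩

lemma apply_mem_of_mem_weylGroup {w : V ≃ₗ[ℝ] V} (hw : w ∈ P.weylGroup) {β : V} (hβ : β ∈ P.R) :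
    w β ∈ P.R := by
  rw [← MulAction.mem_stabilizer_iff.mp (P.weylGroup_le_stabilizer hw)]
  exact Set.smul_mem_smul_set hβ

instance : Finite P.weylGroup := by
  have := P.finR.to_subtype
  refine Finite.of_injective (fun w : P.weylGroup => fun i =>
    (⟨w.1 (P.simple i), P.apply_mem_of_mem_weylGroup w.2 (P.simple_mem i)⟩ : P.R)) ?_
  intro w₁ w₂ h
  exact Subtype.ext <| LinearEquiv.toLinearMap_injective <|
    P.simple.ext fun i => congrArg Subtype.val (congrFun h i)

lemma coroot_apply_mul_eq_of_invariant {B : BilinForm ℝ V}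
    (hB : ∀ w ∈ P.weylGroup, ∀ x y, B (w x) (w y) = B x y) {α : V} (hα : α ∈ P.R) (x : V) :
    P.coroot α x * B α α = 2 * B x α := by
  have h := hB _ (P.reflection_mem_weylGroup hα) x α
  rw [Module.reflection_apply, Module.reflection_apply_self] at h
  simp only [map_neg, map_sub, map_smul, LinearMap.sub_apply, LinearMap.smul_apply,
    smul_eq_mul] at h
  linarith

end RootSystemWithBase

theorem fundChamber_subset_posCone_general
    {ι V : Type*} [Fintype ι] [AddCommGroup V] [Module ℝ V]
    (P : RootSystemWithBase ι V) :
    P.fundChamber ⊆ P.posCone := by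
  obtain ⟨B₀, hB₀⟩ := P.simple.exists_bilinForm_pos
  obtain ⟨B, hpos, hinv⟩ := P.weylGroup.exists_bilinForm_pos_invariant hB₀
  have hcoroot := fun α (hα : α ∈ P.R) x => P.coroot_apply_mul_eq_of_invariant hinv hα x
  have hsimple i : 0 < B (P.simple i) (P.simple i) := hpos _ (P.ne_zero_of_mem (P.simple_mem i))
  intro v hv
  refine ⟨P.simple.repr v, P.simple.repr_nonneg_of_obtuse hpos (fun i j hij => ?_) (fun j => ?_),
    (P.simple.sum_repr v).symm⟩
  · nlinarith [hcoroot _ (P.simple_mem j) (P.simple i), hsimple j,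
      P.coroot_simple_apply_simple_nonpos hij.symm]
  · nlinarith [hcoroot _ (P.simple_mem j) v, hsimple j, hv j]

/-- For an irreducible crystallographic root system, the fundamental Weyl chamber is
contained in the positive cone: every dominant vector is a nonnegative linear
combination of the simple roots. -/
theorem fundChamber_subset_posCone
    {ι V : Type*} [Fintype ι] [AddCommGroup V] [Module ℝ V]
    (P : RootSystemWithBase ι V) (hirr : P.IsIrreducible) :
    P.fundChamber ⊆ P.posCone :=
  fundChamber_subset_posCone_general P
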